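/- The refinement relation on integer partitions of n, defined by ῡ ≼ ξ̄ iff there exist set partitions υ, ξ of {1,…,n} with block-size multisets ῡ and ξ̄ respectively such that υ refines ξ, is a partial order on the set of integer partitions of n. -/

import Mathlib

/-!
A refinement `υ ≤ ξ` of set partitions is recorded, up to relabelling, by the multiset `D` of
the block-size multisets of the `υ`-blocks lying in each `ξ`-block: `D.join` is the type of `υ`
and `D.map sum` the type of `ξ`. Conversely, any such `D` whose sums are the block sizes of a set
partition `Q` is realised by a refinement of `Q`, obtained by cutting each block of `Q` into
pieces of the prescribed sizes. Transitivity follows by realising the `D` of `υ ≤ ξ` below `υ'`,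
which has the same type as `ξ`. Antisymmetry holds because the finer type has at least as many
parts, with equality only when every member of `D` is a singleton, i.e. `D.join = D.map sum`.
-/

open Finset in
/-- The type of a set partition of `Fin n`: the multiset of its block sizes. -/
def ptype {n : ℕ} (ξ : Finpartition (univ : Finset (Fin n))) : Multiset ℕ :=
  ξ.parts.val.map Finset.card

open Finset in
/-- Refinement of set partitions: every block of `υ` is contained in a block of `ξ`. -/
def srefines {n : ℕ} (υ ξ : Finpartition (univ : Finset (Fin n))) : Prop :=
  ∀ Y ∈ υ.parts, ∃ X ∈ ξ.parts, Y ⊆ X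

open Finset in
/-- Refinement relation on integer partitions of `n`, via set-partition representatives. -/
def irefines {n : ℕ} (υb ξb : n.Partition) : Prop :=
  ∃ υ ξ : Finpartition (univ : Finset (Fin n)),
    ptype υ = υb.parts ∧ ptype ξ = ξb.parts ∧ srefines υ ξ

/-- Height: number of parts. -/
def pheight {n : ℕ} (ξb : n.Partition) : ℕ := Multiset.card ξb.parts

/-- Width: largest part. -/
def pwidth {n : ℕ} (ξb : n.Partition) : ℕ := ξb.parts.sup

/-- Rank: width minus height. -/
def prank {n : ℕ} (ξb : n.Partition) : ℤ := (pwidth ξb : ℤ) - (pheight ξb : ℤ)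

/-- Conjugate of a multiset of part sizes: the `i`-th part is the number of parts `≥ i`. -/
def conjParts (p : Multiset ℕ) : Multiset ℕ :=
  (Multiset.range p.sup).map (fun i => Multiset.card (p.filter (fun x => i + 1 ≤ x)))

open Finset

namespace Multiset

variable {α : Type*}

theorem card_le_card_join {D : Multiset (Multiset α)} (hD : 0 ∉ D) : card D ≤ card D.join := by
  induction D using Multiset.induction with
  | empty => simp
  | cons m D ih =>
    rw [mem_cons, not_or] at hD
    have hm : 0 < card m := card_pos.2 (Ne.symm hD.1)
    simp only [card_cons, join_cons, card_add]
    have := ih hD.2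
    omega

theorem join_eq_map_sum_of_card_join_le [AddCommMonoid α] {D : Multiset (Multiset α)}
    (hD : 0 ∉ D) (h : card D.join ≤ card D) : D.join = D.map sum := by
  induction D using Multiset.induction with
  | empty => simp
  | cons m D ih =>
    rw [mem_cons, not_or] at hD
    have hm : 0 < card m := card_pos.2 (Ne.symm hD.1)
    have hD' := card_le_card_join hD.2
    simp only [card_cons, join_cons, card_add] at h
    obtain ⟨a, rfl⟩ := card_eq_one.1 (show card m = 1 by omega)
    rw [join_cons, map_cons, sum_singleton, ih hD.2 (by omega), singleton_add]

end Multiset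

theorem Finset.exists_map_val_eq_of_map_eq {β γ δ : Type*} [Nonempty γ] {f : γ → δ}
    {g : β → δ} (t : Finset β) {s : Multiset γ} (h : s.map f = t.val.map g) :
    ∃ φ : β → γ, t.val.map φ = s ∧ ∀ y ∈ t, f (φ y) = g y := by
  classical
  induction t using Finset.cons_induction generalizing s with
  | empty =>
    refine ⟨fun _ => Classical.arbitrary γ, ?_, by simp⟩
    simpa [eq_comm] using h
  | cons y t hy ih =>
    rw [cons_val, Multiset.map_cons] at h
    obtain ⟨x, hx, hfx⟩ := Multiset.mem_map.1 (h ▸ Multiset.mem_cons_self _ _)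
    obtain ⟨s, rfl⟩ := Multiset.exists_cons_of_mem hx
    rw [Multiset.map_cons, hfx, Multiset.cons_inj_right] at h
    obtain ⟨φ, rfl, hφ⟩ := ih h
    have hφ_eq : ∀ z ∈ t, Function.update φ y x z = φ z := fun z hz =>
      Function.update_of_ne (ne_of_mem_of_not_mem hz hy) _ _
    refine ⟨Function.update φ y x, ?_, ?_⟩
    · rw [cons_val, Multiset.map_cons, Function.update_self, Multiset.map_congr rfl hφ_eq]
    · simp only [mem_cons, forall_eq_or_imp, Function.update_self, hfx, true_and]
      exact fun z hz => (hφ_eq z hz).symm ▸ hφ z hz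

namespace Finpartition

variable {α : Type*}

section Lattice

variable [Lattice α] [OrderBot α] [IsModularLattice α] [DecidableEq α] {a : α}

theorem bind_le (P : Finpartition a) (Q : ∀ i ∈ P.parts, Finpartition i) : P.bind Q ≤ P :=
  fun b hb => by
    obtain ⟨A, hA, hb⟩ := mem_bind.1 hb
    exact ⟨A, hA, (Q A hA).le hb⟩

theorem bind_parts_val (P : Finpartition a) (Q : ∀ i ∈ P.parts, Finpartition i) :
    (P.bind Q).parts.val = (P.parts.attach.val.map fun A => (Q A.1 A.2).parts.val).join := by
  rw [bind_parts, ← disjiUnion_eq_biUnion _ _ ?_, disjiUnion_val]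
  · rfl
  rintro ⟨b, hb⟩ - ⟨c, hc⟩ - hbc
  rw [Function.onFun, Finset.disjoint_left]
  intro d hdb hdc
  rw [Ne, Subtype.mk_eq_mk] at hbc
  exact (Q b hb).ne_bot hdb <| eq_bot_iff.2 <|
    (le_inf ((Q b hb).le hdb) ((Q c hc).le hdc)).trans (P.disjoint hb hc hbc).le_bot

end Lattice

theorem bind_restrict_of_le [DistribLattice α] [OrderBot α] [DecidableEq α] {a : α}
    {P Q : Finpartition a} (h : P ≤ Q) :
    Q.bind (fun _ hX => P.restrict (Q.le hX)) = P := by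
  ext b
  simp only [mem_bind, restrict, mem_erase, mem_image]
  constructor
  · rintro ⟨X, hX, hb, p, hp, rfl⟩
    obtain ⟨X', hX', hpX'⟩ := h hp
    obtain rfl : X = X' := by
      by_contra hne
      exact hb ((Q.disjoint hX hX' hne).mono_right hpX').symm.eq_bot
    rwa [inf_eq_left.2 hpX']
  · intro hb
    obtain ⟨X, hX, hbX⟩ := h hb
    exact ⟨X, hX, P.ne_bot hb, b, hb, inf_eq_left.2 hbX⟩

section Finset

variable [DecidableEq α] {s : Finset α}

theorem zero_notMem_map_card_parts (P : Finpartition s) : 0 ∉ P.parts.val.map card := by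
  simp only [Multiset.mem_map, not_exists, not_and]
  exact fun X hX => (P.nonempty_of_mem_parts hX).card_ne_zero

theorem exists_map_card_parts_eq (m : Multiset ℕ) (hm : 0 ∉ m) (hs : m.sum = #s) :
    ∃ P : Finpartition s, P.parts.val.map card = m := by
  induction m using Multiset.induction generalizing s with
  | empty =>
    obtain rfl : s = ∅ := card_eq_zero.1 (by simpa using hs.symm)
    exact ⟨Finpartition.empty _, rfl⟩
  | cons k m ih =>
    rw [Multiset.mem_cons, not_or] at hm
    rw [Multiset.sum_cons] at hs
    obtain ⟨u, hus, hu⟩ := s.exists_subset_card_eq (show k ≤ #s by omega)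
    obtain ⟨P, hP⟩ := ih hm.2 (s := s \ u) (by rw [card_sdiff_of_subset hus]; omega)
    have hu0 : u ≠ ⊥ := by
      rintro rfl
      exact hm.1 (by simpa using hu)
    refine ⟨P.extend hu0 sdiff_disjoint (sdiff_union_of_subset hus), ?_⟩
    rw [extend_parts, insert_val_of_notMem, Multiset.map_cons, hP, hu]
    exact fun h => hu0 (sdiff_disjoint.symm.eq_bot_of_le (P.le h))

theorem exists_join_eq_of_le {P Q : Finpartition s} (h : P ≤ Q) :
    ∃ D : Multiset (Multiset ℕ), (∀ m ∈ D, 0 ∉ m) ∧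
      D.map Multiset.sum = Q.parts.val.map card ∧ D.join = P.parts.val.map card := by
  refine ⟨Q.parts.attach.val.map fun X => (P.restrict (Q.le X.2)).parts.val.map card,
    ?_, ?_, ?_⟩
  · simp only [Multiset.mem_map]
    rintro _ ⟨X, -, rfl⟩
    exact zero_notMem_map_card_parts _
  · rw [Multiset.map_map, ← Multiset.attach_map_val' _ card]
    exact Multiset.map_congr rfl fun X _ => (P.restrict _).sum_card_parts
  · conv_rhs => rw [← bind_restrict_of_le h, bind_parts_val, Multiset.map_join, Multiset.map_map]
    rfl

theorem exists_le_map_card_parts_eq_join (Q : Finpartition s) {D : Multiset (Multiset ℕ)}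
    (hD : ∀ m ∈ D, 0 ∉ m) (h : D.map Multiset.sum = Q.parts.val.map card) :
    ∃ P ≤ Q, P.parts.val.map card = D.join := by
  obtain ⟨φ, rfl, hφ⟩ := Q.parts.exists_map_val_eq_of_map_eq h
  have hR : ∀ X ∈ Q.parts, ∃ R : Finpartition X, R.parts.val.map card = φ X := fun X hX =>
    exists_map_card_parts_eq _ (hD _ (Multiset.mem_map_of_mem φ hX)) (hφ X hX)
  choose R hR using hR
  refine ⟨Q.bind R, bind_le Q R, ?_⟩
  rw [bind_parts_val, Multiset.map_join, Multiset.map_map, ← Multiset.attach_map_val' _ φ]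
  exact congrArg _ (Multiset.map_congr rfl fun X _ => hR X.1 X.2)

end Finset

end Finpartition

theorem srefines_iff_le {n : ℕ} {υ ξ : Finpartition (univ : Finset (Fin n))} :
    srefines υ ξ ↔ υ ≤ ξ :=
  Iff.rfl

theorem card_ptype {n : ℕ} (ξ : Finpartition (univ : Finset (Fin n))) :
    Multiset.card (ptype ξ) = #ξ.parts :=
  Multiset.card_map _ _

/-- The refinement relation on integer partitions of `n` is a
partial order. -/
theorem irefines_isPartialOrder (n : ℕ) :
    IsPartialOrder (n.Partition) irefines where
  refl a := by
    obtain ⟨P, hP⟩ :=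
      Finpartition.exists_map_card_parts_eq (s := (univ : Finset (Fin n))) a.parts
      (fun h => (a.parts_pos h).ne rfl) (by rw [a.parts_sum, card_univ, Fintype.card_fin])
    exact ⟨P, P, hP, hP, srefines_iff_le.2 le_rfl⟩
  trans a b c := by
    rintro ⟨υ, ξ, hυ, hξ, hυξ⟩ ⟨υ', ξ', hυ', hξ', hυ'ξ'⟩
    obtain ⟨D, hD0, hDsum, hDjoin⟩ := Finpartition.exists_join_eq_of_le hυξ
    obtain ⟨P, hPυ', hP⟩ :=
      υ'.exists_le_map_card_parts_eq_join hD0 (hDsum.trans (hξ.trans hυ'.symm))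
    exact ⟨P, ξ', hP.trans (hDjoin.trans hυ), hξ', hPυ'.trans hυ'ξ'⟩
  antisymm a b := by
    rintro ⟨υ, ξ, hυ, hξ, hυξ⟩ ⟨υ', ξ', hυ', hξ', hυ'ξ'⟩
    obtain ⟨D, -, hDsum, hDjoin⟩ := Finpartition.exists_join_eq_of_le hυξ
    replace hDsum : D.map Multiset.sum = b.parts := hDsum.trans hξ
    replace hDjoin : D.join = a.parts := hDjoin.trans hυ
    have hD : 0 ∉ D := fun h =>
      (b.parts_pos (hDsum ▸ Multiset.mem_map_of_mem Multiset.sum h)).ne Multiset.sum_zero.symm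
    have hcard : Multiset.card D.join ≤ Multiset.card D := by
      rw [hDjoin, ← hξ', card_ptype, ← Multiset.card_map Multiset.sum, hDsum, ← hυ',
        card_ptype]
      exact Finpartition.card_mono hυ'ξ'
    exact Nat.Partition.ext <|
      hDjoin.symm.trans ((Multiset.join_eq_map_sum_of_card_join_le hD hcard).trans hDsum)
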